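/- Let μ > 0, U > 0, δ ≥ 2μ/U, let Ω ⊆ Λ, and let ρ̃ : Λ → ℝ be a nonnegative function with ρ̃(x) ≥ δ for all x ∈ Λ∖Ω, viewed as a diagonal matrix. Set H := -Δ - μ·Id + U·ρ̃. Then for every e ≥ 0 the block P_Ω^⊥(H + e·Id)P_Ω^⊥ is positive definite (hence invertible) on the range of P_Ω^⊥, and for every λ > 0 the number of eigenvalues of H strictly below -λ (counted with multiplicity) is at most the number of strictly negative eigenvalues (counted with multiplicity) of the Feshbach matrix F(λ) + λ·P_Ω restricted to the range of P_Ω, where F(e) := P_Ω H P_Ω - P_Ω Δ P_Ω^⊥ [P_Ω^⊥(H + e·Id)P_Ω^⊥]^{-1} P_Ω^⊥ Δ P_Ω and the inverse is taken on the range of P_Ω^⊥. -/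

import Mathlib

open Matrix
open scoped BigOperators Classical ComplexOrder

noncomputable section

/-- The discrete torus `Λ = (ℤ/Lℤ)^d`. -/
abbrev Lam (d L : ℕ) : Type := Fin d → ZMod L

/-- `x` and `y` are nearest neighbors on the torus (ℓ¹-distance 1). -/
def isNN {d L : ℕ} (x y : Lam d L) : Prop :=
  ∃ ν : Fin d, (x ν = y ν + 1 ∨ x ν + 1 = y ν) ∧ ∀ μ : Fin d, μ ≠ ν → x μ = y μ

/-- The discrete Laplacian `Δ = T - 2d·Id` on the torus. -/
def lap (d L : ℕ) : Matrix (Lam d L) (Lam d L) ℂ :=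
  (Matrix.of fun x y => if isNN x y then (1 : ℂ) else 0) - (2 * (d : ℂ)) • 1

/-- A one-particle density matrix: hermitian with `0 ≤ γ ≤ 1` as quadratic forms. -/
def IsDM {d L : ℕ} [NeZero L] (γ : Matrix (Lam d L) (Lam d L) ℂ) : Prop :=
  γ.PosSemidef ∧ (1 - γ).PosSemidef

/-- `Tr{[X]_-}`: the sum of the negative eigenvalues of a hermitian matrix `X`
(junk value `0` if `X` is not hermitian). -/
def negTrace {n : Type} [Fintype n] [DecidableEq n] (X : Matrix n n ℂ) : ℝ :=
  if hX : X.IsHermitian then ∑ i, min (hX.eigenvalues i) 0 else 0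

/-- The HFz energy functional. -/
def hfzE {d L : ℕ} [NeZero L] (μ U : ℝ) (γu γd : Matrix (Lam d L) (Lam d L) ℂ) : ℝ :=
  (((-(lap d L) - (μ : ℂ) • 1) * (γu + γd)).trace).re
    + U * ∑ x, (γu x x).re * (γd x x).re

/-- The set of HFz energy values over pairs of one-particle density matrices. -/
def hfzEnergies (d L : ℕ) [NeZero L] (μ U : ℝ) : Set ℝ :=
  { E | ∃ γu γd : Matrix (Lam d L) (Lam d L) ℂ, IsDM γu ∧ IsDM γd ∧ hfzE μ U γu γd = E }

/-- The diagonal orthogonal projection `P_A` onto the coordinates in `A`. -/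
def proj {d L : ℕ} (A : Set (Lam d L)) : Matrix (Lam d L) (Lam d L) ℂ :=
  Matrix.diagonal fun x => if x ∈ A then 1 else 0

/-- The boundary `∂Ω := {x ∈ Ω : x has a nearest neighbor outside Ω}`. -/
def bdry {d L : ℕ} (Ω : Set (Lam d L)) : Set (Lam d L) :=
  {x | x ∈ Ω ∧ ∃ y, y ∉ Ω ∧ isNN x y}

/-- The number of eigenvalues (with multiplicity) of a hermitian matrix `X` strictly
below `t` (junk value `0` if `X` is not hermitian). -/
def negCount {n : Type} [Fintype n] [DecidableEq n] (X : Matrix n n ℂ) (t : ℝ) : ℕ :=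
  if hX : X.IsHermitian then (Finset.univ.filter fun i => hX.eigenvalues i < t).card else 0

/-- The compression of a `Λ×Λ` matrix to the block `A×B`. -/
def blk {d L : ℕ} (A B : Set (Lam d L)) (X : Matrix (Lam d L) (Lam d L) ℂ) :
    Matrix A B ℂ :=
  X.submatrix Subtype.val Subtype.val

/-!
Off `Ω` the potential `Uρ̃ - μ + e` is at least `2μ - μ = μ`, while `-Δ ≥ 0` because the hopping
matrix has row sums at most `2d` (Schur test); so the compression of `H + e` to `Ωᶜ` is positive
definite. For `λ > 0` the Schur complement identity writes the form of `H + λ` as the form of this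
positive block at a shifted vector plus the form of `F(λ) + λ` at the `Ω`-part of the vector. Hence
restriction to `Ω` maps the spectral subspace of `H` below `-λ` injectively onto a subspace on which
`F(λ) + λ` is negative, and the min-max characterisation of the eigenvalue count concludes.
-/

lemma Complex.two_mul_re_conj_mul_le (z w : ℂ) :
    2 * (starRingEnd ℂ z * w).re ≤ Complex.normSq z + Complex.normSq w := by
  simp only [Complex.mul_re, Complex.conj_re, Complex.conj_im, Complex.normSq_apply]
  nlinarith [sq_nonneg (z.re - w.re), sq_nonneg (z.im - w.im)]

namespace Matrix

variable {n m : Type*} [Fintype n] [Fintype m]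

def quadForm (M : Matrix n n ℂ) (v : n → ℂ) : ℝ := (star v ⬝ᵥ (M *ᵥ v)).re

lemma quadForm_add (M N : Matrix n n ℂ) (v : n → ℂ) :
    quadForm (M + N) v = quadForm M v + quadForm N v := by
  simp only [quadForm, add_mulVec, dotProduct_add, Complex.add_re]

lemma quadForm_sub (M N : Matrix n n ℂ) (v : n → ℂ) :
    quadForm (M - N) v = quadForm M v - quadForm N v := by
  simp only [quadForm, sub_mulVec, dotProduct_sub, Complex.sub_re]

lemma quadForm_zero_right (M : Matrix n n ℂ) : quadForm M 0 = 0 := by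
  simp [quadForm]

lemma quadForm_diagonal_ofReal [DecidableEq n] (c : n → ℝ) (v : n → ℂ) :
    quadForm (diagonal fun i => (c i : ℂ)) v = ∑ i, c i * Complex.normSq (v i) := by
  simp only [quadForm, mulVec_diagonal, dotProduct, Pi.star_apply, Complex.re_sum]
  refine Finset.sum_congr rfl fun i _ => ?_
  rw [Complex.star_def, mul_left_comm, ← Complex.normSq_eq_conj_mul_self, ← Complex.ofReal_mul,
    Complex.ofReal_re]

lemma quadForm_smul_one [DecidableEq n] (c : ℝ) (v : n → ℂ) :
    quadForm ((c : ℂ) • (1 : Matrix n n ℂ)) v = c * ∑ i, Complex.normSq (v i) := by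
  rw [smul_one_eq_diagonal, quadForm_diagonal_ofReal, Finset.mul_sum]

lemma quadForm_submatrix_equiv (M : Matrix n n ℂ) (e : m ≃ n) (v : n → ℂ) :
    quadForm (M.submatrix e e) (v ∘ e) = quadForm M v := by
  rw [quadForm, quadForm, submatrix_mulVec_equiv, Function.comp_assoc, e.self_comp_symm,
    Function.comp_id]
  exact congrArg Complex.re (Fintype.sum_equiv e _ _ fun _ => rfl)

lemma quadForm_unitary_conj [DecidableEq n] (U : unitaryGroup n ℂ) (X : Matrix n n ℂ)
    (v : n → ℂ) :
    quadForm ((U : Matrix n n ℂ) * X * star (U : Matrix n n ℂ)) v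
      = quadForm X (star (U : Matrix n n ℂ) *ᵥ v) := by
  rw [quadForm, quadForm, ← mulVec_mulVec, ← mulVec_mulVec, dotProduct_mulVec, star_mulVec,
    star_eq_conjTranspose, conjTranspose_conjTranspose]

lemma PosSemidef.quadForm_nonneg {M : Matrix n n ℂ} (hM : M.PosSemidef) (v : n → ℂ) :
    0 ≤ quadForm M v :=
  hM.re_dotProduct_nonneg v

lemma IsHermitian.posSemidef_of_quadForm_nonneg {M : Matrix n n ℂ} (hM : M.IsHermitian)
    (h : ∀ v, 0 ≤ quadForm M v) : M.PosSemidef :=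
  PosSemidef.of_dotProduct_mulVec_nonneg hM fun v =>
    RCLike.nonneg_iff.mpr ⟨h v, hM.im_star_dotProduct_mulVec_self v⟩

section Spectral

variable [DecidableEq n]

lemma quadForm_one (v : n → ℂ) : quadForm 1 v = ∑ i, Complex.normSq (v i) := by
  simpa using quadForm_diagonal_ofReal (fun _ => 1) v

def IsHermitian.eigenCoord {M : Matrix n n ℂ} (hM : M.IsHermitian) : (n → ℂ) ≃ₗ[ℂ] (n → ℂ) :=
  UnitaryGroup.toLinearEquiv (star hM.eigenvectorUnitary)

lemma IsHermitian.quadForm_sub_eq_sum_eigenvalues {M : Matrix n n ℂ} (hM : M.IsHermitian) (t : ℝ)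
    (v : n → ℂ) :
    quadForm M v - t * ∑ i, Complex.normSq (v i)
      = ∑ i, (hM.eigenvalues i - t) * Complex.normSq (hM.eigenCoord v i) := by
  set U : Matrix n n ℂ := (hM.eigenvectorUnitary : Matrix n n ℂ)
  have hform : quadForm M v = ∑ i, hM.eigenvalues i * Complex.normSq (hM.eigenCoord v i) := by
    conv_lhs => rw [hM.spectral_theorem, Unitary.conjStarAlgAut_apply]
    exact (quadForm_unitary_conj _ _ v).trans (quadForm_diagonal_ofReal _ _)
  have hnorm : ∑ i, Complex.normSq (v i) = ∑ i, Complex.normSq (hM.eigenCoord v i) := by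
    have hU : U * 1 * star U = 1 := by
      rw [Matrix.mul_one]; exact hM.eigenvectorUnitary.2.2
    calc ∑ i, Complex.normSq (v i) = quadForm (U * 1 * star U) v := by rw [hU, quadForm_one]
      _ = ∑ i, Complex.normSq (hM.eigenCoord v i) := by
        rw [quadForm_unitary_conj, quadForm_one]; rfl
  rw [hform, hnorm, Finset.mul_sum, ← Finset.sum_sub_distrib]
  exact Finset.sum_congr rfl fun i _ => by ring

end Spectral

theorem quadForm_schur_complement_le {o : Type*} [Fintype o] [DecidableEq o]
    (A : Matrix m m ℂ) (B : Matrix m o ℂ) {D : Matrix o o ℂ} (hD : D.PosDef)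
    (x : m → ℂ) (y : o → ℂ) :
    quadForm (A - B * D⁻¹ * Bᴴ) x ≤ quadForm (fromBlocks A B Bᴴ D) (Sum.elim x y) := by
  have := hD.isUnit.invertible
  have hy := hD.posSemidef.quadForm_nonneg ((D⁻¹ * Bᴴ) *ᵥ x + y)
  rw [quadForm, dotProduct_mulVec] at hy
  rw [quadForm, quadForm, dotProduct_mulVec, dotProduct_mulVec,
    schur_complement_eq₂₂ A B x y hD.isHermitian, Complex.add_re]
  linarith

/-- Schur test, from `2 Re (z̄ w) ≤ |z|² + |w|²`. -/
theorem posSemidef_smul_one_sub_of_sum_le [DecidableEq n]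
    (k : n → n → ℝ) (hk : ∀ i j, 0 ≤ k i j) (hsymm : ∀ i j, k i j = k j i) {c : ℝ}
    (hc : ∀ i, ∑ j, k i j ≤ c) :
    ((c : ℂ) • 1 - of fun i j => (k i j : ℂ)).PosSemidef := by
  set K : Matrix n n ℂ := of fun i j => (k i j : ℂ)
  have hK : K.IsHermitian := by
    ext i j
    simp [K, hsymm j i]
  have hherm : ((c : ℂ) • (1 : Matrix n n ℂ) - K).IsHermitian :=
    (isHermitian_one.smul (Complex.conj_ofReal c)).sub hK
  refine hherm.posSemidef_of_quadForm_nonneg fun x => ?_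
  set N : n → ℝ := fun i => Complex.normSq (x i)
  have hquad : quadForm K x = ∑ i, ∑ j, k i j * (starRingEnd ℂ (x i) * x j).re := by
    simp only [quadForm, K, mulVec, dotProduct, of_apply, Pi.star_apply, Finset.mul_sum,
      Complex.re_sum]
    refine Finset.sum_congr rfl fun i _ => Finset.sum_congr rfl fun j _ => ?_
    rw [Complex.star_def, mul_left_comm, Complex.re_ofReal_mul]
  have hswap : ∑ i, ∑ j, k i j * N j = ∑ i, ∑ j, k i j * N i := by
    rw [Finset.sum_comm]
    simp only [hsymm]
  have hbound : quadForm K x ≤ c * ∑ i, N i := calc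
    quadForm K x ≤ ∑ i, ∑ j, k i j * ((N i + N j) / 2) := by
      rw [hquad]
      gcongr with i _ j _
      · exact hk i j
      · linarith [Complex.two_mul_re_conj_mul_le (x i) (x j)]
    _ = ∑ i, (∑ j, k i j) * N i := by
      have hsplit : ∀ i j, k i j * ((N i + N j) / 2) = (k i j * N i + k i j * N j) / 2 :=
        fun i j => by ring
      simp only [hsplit, ← Finset.sum_div, Finset.sum_add_distrib, hswap, Finset.sum_mul]
      ring
    _ ≤ ∑ i, c * N i := by
      gcongr with i _
      · exact Complex.normSq_nonneg _
      · exact hc i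
    _ = c * ∑ i, N i := Finset.mul_sum _ _ _ |>.symm
  rw [quadForm_sub, quadForm_smul_one]
  linarith

end Matrix

namespace Matrix

variable {n m : Type} [Fintype n] [Fintype m] [DecidableEq n] [DecidableEq m]

lemma IsHermitian.negCount_eq_card {M : Matrix n n ℂ} (hM : M.IsHermitian) (t : ℝ) :
    negCount M t = Fintype.card {i // hM.eigenvalues i < t} := by
  rw [negCount, dif_pos hM, Fintype.card_subtype]

theorem IsHermitian.exists_submodule_finrank_eq_negCount {M : Matrix n n ℂ}
    (hM : M.IsHermitian) (t : ℝ) :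
    ∃ W : Submodule ℂ (n → ℂ), Module.finrank ℂ W = negCount M t ∧
      ∀ v ∈ W, v ≠ 0 → quadForm M v < t * ∑ i, Complex.normSq (v i) := by
  set κ : (n → ℂ) →ₗ[ℂ] ({i // ¬ hM.eigenvalues i < t} → ℂ) :=
    LinearMap.funLeft ℂ ℂ Subtype.val ∘ₗ hM.eigenCoord.toLinearMap
  have hκ : Function.Surjective κ :=
    (LinearMap.funLeft_surjective_of_injective ℂ ℂ _ Subtype.val_injective).comp
      hM.eigenCoord.surjective
  refine ⟨LinearMap.ker κ, ?_, fun v hv hv0 => ?_⟩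
  · have hrank := κ.finrank_range_add_finrank_ker
    rw [LinearMap.range_eq_top.mpr hκ, finrank_top, Module.finrank_fintype_fun_eq_card,
      Module.finrank_fintype_fun_eq_card, Fintype.card_subtype_compl] at hrank
    have := Fintype.card_subtype_le fun i => hM.eigenvalues i < t
    rw [hM.negCount_eq_card]
    omega
  · have hw : ∀ i, ¬ hM.eigenvalues i < t → hM.eigenCoord v i = 0 :=
      fun i hi => congrFun hv ⟨i, hi⟩
    obtain ⟨i, hi⟩ := Function.ne_iff.mp ((map_ne_zero_iff _ hM.eigenCoord.injective).mpr hv0)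
    have hit : hM.eigenvalues i < t := by_contra fun h => hi (hw i h)
    rw [← sub_neg, hM.quadForm_sub_eq_sum_eigenvalues]
    refine Finset.sum_neg' (fun j _ => ?_) ⟨i, Finset.mem_univ i, ?_⟩
    · by_cases hj : hM.eigenvalues j < t
      · exact mul_nonpos_of_nonpos_of_nonneg (by linarith) (Complex.normSq_nonneg _)
      · simp [hw j hj]
    · exact mul_neg_of_neg_of_pos (by linarith) (Complex.normSq_pos.mpr hi)

theorem IsHermitian.finrank_le_negCount {M : Matrix n n ℂ} (hM : M.IsHermitian) (t : ℝ)
    (W : Submodule ℂ (n → ℂ))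
    (hW : ∀ v ∈ W, v ≠ 0 → quadForm M v < t * ∑ i, Complex.normSq (v i)) :
    Module.finrank ℂ W ≤ negCount M t := by
  by_contra! hlt
  set κ : W →ₗ[ℂ] ({i // hM.eigenvalues i < t} → ℂ) :=
    (LinearMap.funLeft ℂ ℂ Subtype.val ∘ₗ hM.eigenCoord.toLinearMap).domRestrict W
  have hker : LinearMap.ker κ ≠ ⊥ := LinearMap.ker_ne_bot_of_finrank_lt <| by
    rwa [Module.finrank_fintype_fun_eq_card, ← hM.negCount_eq_card]
  obtain ⟨⟨v, hvW⟩, hv, hv0⟩ := Submodule.exists_mem_ne_zero_of_ne_bot hker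
  have hw : ∀ i, hM.eigenvalues i < t → hM.eigenCoord v i = 0 :=
    fun i hi => congrFun hv ⟨i, hi⟩
  have hneg := hW v hvW fun h => hv0 (Subtype.ext h)
  rw [← sub_neg, hM.quadForm_sub_eq_sum_eigenvalues] at hneg
  refine hneg.not_ge (Finset.sum_nonneg fun i _ => ?_)
  by_cases hi : hM.eigenvalues i < t
  · simp [hw i hi]
  · exact mul_nonneg (by linarith) (Complex.normSq_nonneg _)

theorem IsHermitian.negCount_le_negCount_of_quadForm_le {M : Matrix n n ℂ} {N : Matrix m m ℂ}
    (hM : M.IsHermitian) (hN : N.IsHermitian) (r : (n → ℂ) →ₗ[ℂ] (m → ℂ)) (t : ℝ)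
    (h : ∀ v, quadForm N (r v) ≤ quadForm M v - t * ∑ i, Complex.normSq (v i)) :
    negCount M t ≤ negCount N 0 := by
  obtain ⟨W, hWdim, hW⟩ := hM.exists_submodule_finrank_eq_negCount t
  have hneg : ∀ v ∈ W, v ≠ 0 → quadForm N (r v) < 0 :=
    fun v hv hv0 => (h v).trans_lt (sub_neg.mpr (hW v hv hv0))
  have hinj : Function.Injective (r.domRestrict W) := by
    refine (injective_iff_map_eq_zero _).mpr fun ⟨v, hv⟩ hrv => Subtype.ext ?_
    by_contra hv0
    have hr : r v = 0 := hrv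
    exact (hneg v hv hv0).ne (by rw [hr, quadForm_zero_right])
  rw [← hWdim, ← LinearMap.finrank_range_of_inj hinj, LinearMap.range_domRestrict]
  refine hN.finrank_le_negCount 0 _ fun u hu hu0 => ?_
  obtain ⟨v, hv, rfl⟩ := Submodule.mem_map.mp hu
  rw [zero_mul]
  exact hneg v hv fun h => hu0 (by rw [h, map_zero])

end Matrix

section Torus

variable {d L : ℕ}

lemma isNN_comm {x y : Lam d L} : isNN x y ↔ isNN y x := by
  constructor <;>
  · rintro ⟨ν, h | h, hrest⟩
    · exact ⟨ν, Or.inr h.symm, fun μ hμ => (hrest μ hμ).symm⟩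
    · exact ⟨ν, Or.inl h.symm, fun μ hμ => (hrest μ hμ).symm⟩

lemma card_filter_isNN_le [NeZero L] (x : Lam d L) :
    (Finset.univ.filter (isNN x)).card ≤ 2 * d := by
  have hsub : Finset.univ.filter (isNN x) ⊆ (Finset.univ : Finset (Fin d × Bool)).image
      fun p => Function.update x p.1 (x p.1 + if p.2 then 1 else -1) := by
    intro y hy
    obtain ⟨ν, hν, hrest⟩ := (Finset.mem_filter.mp hy).2
    refine Finset.mem_image.mpr ⟨(ν, decide (x ν + 1 = y ν)), Finset.mem_univ _, ?_⟩
    funext μ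
    by_cases hμ : μ = ν
    · subst hμ
      by_cases h : x μ + 1 = y μ
      · simp [h]
      · have hy : y μ = x μ + -1 := by rw [hν.resolve_right h]; ring
        simp [hy]
    · simp [Function.update_of_ne hμ, hrest μ hμ]
  calc _ ≤ _ := Finset.card_le_card hsub
    _ ≤ _ := Finset.card_image_le
    _ = 2 * d := by simp [mul_comm]

lemma neg_lap_posSemidef [NeZero L] : (-lap d L).PosSemidef := by
  have hlap : -lap d L
      = ((2 * d : ℝ) : ℂ) • 1 - of fun x y => ((if isNN x y then 1 else 0 : ℝ) : ℂ) := by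
    ext x y
    by_cases h : isNN x y <;> simp [lap, h]
  rw [hlap]
  refine posSemidef_smul_one_sub_of_sum_le _ (fun _ _ => by positivity)
    (fun x y => by simp only [isNN_comm]) fun x => ?_
  rw [Finset.sum_boole]
  exact_mod_cast card_filter_isNN_le x

lemma lap_isHermitian [NeZero L] : (lap d L).IsHermitian := by
  simpa using neg_lap_posSemidef.isHermitian.neg

section Blocks

variable {A B : Set (Lam d L)}

@[simp]
lemma blk_add (X Y : Matrix (Lam d L) (Lam d L) ℂ) : blk A B (X + Y) = blk A B X + blk A B Y :=
  rfl

@[simp]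
lemma blk_neg (X : Matrix (Lam d L) (Lam d L) ℂ) : blk A B (-X) = -blk A B X :=
  rfl

@[simp]
lemma blk_smul_one (c : ℂ) : blk A A (c • 1) = c • 1 := by
  ext i j
  simp [blk, one_apply, Subtype.ext_iff]

lemma blk_diagonal (f : Lam d L → ℂ) : blk A A (diagonal f) = diagonal (f ∘ Subtype.val) :=
  submatrix_diagonal _ _ Subtype.val_injective

lemma blk_diagonal_of_disjoint (h : Disjoint A B) (f : Lam d L → ℂ) :
    blk A B (diagonal f) = 0 := by
  ext i j
  exact diagonal_apply_ne _ fun hij => h.ne_of_mem i.2 j.2 hij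

lemma blk_conjTranspose {X : Matrix (Lam d L) (Lam d L) ℂ} (hX : X.IsHermitian) :
    (blk A B X)ᴴ = blk B A X := by
  rw [blk, conjTranspose_submatrix, hX.eq, blk]

end Blocks

section Schur

variable (Ω : Set (Lam d L)) {M : Matrix (Lam d L) (Lam d L) ℂ}

lemma fromBlocks_blk_eq (hM : M.IsHermitian) :
    fromBlocks (blk Ω Ω M) (blk Ω Ωᶜ M) (blk Ω Ωᶜ M)ᴴ (blk Ωᶜ Ωᶜ M)
      = M.submatrix (Equiv.Set.sumCompl Ω) (Equiv.Set.sumCompl Ω) := by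
  rw [blk_conjTranspose hM]
  ext (i | i) (j | j) <;> rfl

variable [NeZero L]

lemma isHermitian_blk_schur (hM : M.IsHermitian) (hD : (blk Ωᶜ Ωᶜ M).PosDef) :
    (blk Ω Ω M - blk Ω Ωᶜ M * (blk Ωᶜ Ωᶜ M)⁻¹ * (blk Ω Ωᶜ M)ᴴ).IsHermitian :=
  (IsHermitian.fromBlocks₂₂ _ _ hD.isHermitian).mp
    (fromBlocks_blk_eq Ω hM ▸ hM.submatrix _)

lemma quadForm_blk_schur_le (hM : M.IsHermitian) (hD : (blk Ωᶜ Ωᶜ M).PosDef)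
    (v : Lam d L → ℂ) :
    quadForm (blk Ω Ω M - blk Ω Ωᶜ M * (blk Ωᶜ Ωᶜ M)⁻¹ * (blk Ω Ωᶜ M)ᴴ) (v ∘ Subtype.val)
      ≤ quadForm M v := by
  have hv : Sum.elim (v ∘ Subtype.val) (v ∘ Subtype.val) = v ∘ Equiv.Set.sumCompl Ω := by
    ext (i | i) <;> rfl
  calc _ ≤ _ := quadForm_schur_complement_le _ _ hD _ (v ∘ Subtype.val)
    _ = quadForm M v := by rw [fromBlocks_blk_eq Ω hM, hv, quadForm_submatrix_equiv]

end Schur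

variable [NeZero L]

lemma posDef_blk_compl_neg_lap_add_diagonal (Ω : Set (Lam d L)) (V : Lam d L → ℝ)
    (hV : ∀ x, x ∉ Ω → 0 < V x) :
    (blk Ωᶜ Ωᶜ (-lap d L + diagonal fun x => (V x : ℂ))).PosDef := by
  rw [blk_add, blk_diagonal]
  exact PosDef.posSemidef_add (neg_lap_posSemidef.submatrix Subtype.val)
    (PosDef.diagonal fun x => Complex.zero_lt_real.mpr (hV x x.2))

lemma feshbach_eq_blk_schur (Ω : Set (Lam d L)) {H : Matrix (Lam d L) (Lam d L) ℂ} (c : ℝ)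
    (V : Lam d L → ℂ) (hV : H + (c : ℂ) • 1 = -lap d L + diagonal V) :
    blk Ω Ω H - blk Ω Ωᶜ (lap d L) * (blk Ωᶜ Ωᶜ (H + (c : ℂ) • 1))⁻¹ * blk Ωᶜ Ω (lap d L)
        + (c : ℂ) • 1
      = blk Ω Ω (H + (c : ℂ) • 1) - blk Ω Ωᶜ (H + (c : ℂ) • 1)
          * (blk Ωᶜ Ωᶜ (H + (c : ℂ) • 1))⁻¹ * (blk Ω Ωᶜ (H + (c : ℂ) • 1))ᴴ := by
  have hoff : blk Ω Ωᶜ (H + (c : ℂ) • 1) = -blk Ω Ωᶜ (lap d L) := by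
    rw [hV, blk_add, blk_diagonal_of_disjoint disjoint_compl_right, add_zero, blk_neg]
  rw [hoff, conjTranspose_neg, blk_conjTranspose lap_isHermitian]
  simp only [blk_add, blk_smul_one, Matrix.neg_mul, Matrix.mul_neg, neg_neg]
  abel

end Torus

theorem feshbach_eigenvalue_counting_general (d L : ℕ) [NeZero L]
    (μ U δ : ℝ) (hμ : 0 < μ) (hU : 0 < U)
    (hδ : 2 * μ / U ≤ δ)
    (Ω : Set (Lam d L)) (ρt : Lam d L → ℝ)
    (hρδ : ∀ x, x ∉ Ω → δ ≤ ρt x)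
    (H : Matrix (Lam d L) (Lam d L) ℂ)
    (hH : H = -(lap d L) - (μ : ℂ) • 1 + Matrix.diagonal (fun x => (U * ρt x : ℂ))) :
    (∀ e : ℝ, 0 ≤ e → (blk Ωᶜ Ωᶜ (H + (e : ℂ) • 1)).PosDef) ∧
    (∀ lam : ℝ, 0 < lam →
      negCount H (-lam) ≤
        negCount (blk Ω Ω H
            - blk Ω Ωᶜ (lap d L) * (blk Ωᶜ Ωᶜ (H + (lam : ℂ) • 1))⁻¹
                * blk Ωᶜ Ω (lap d L)
            + (lam : ℂ) • 1) 0) := by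
  have hshift : ∀ e : ℝ,
      H + (e : ℂ) • 1 = -lap d L + diagonal fun x => ((U * ρt x - μ + e : ℝ) : ℂ) := by
    intro e
    ext x y
    by_cases hxy : x = y <;> simp [hH, hxy]
    ring
  have hHerm : ∀ e : ℝ, (H + (e : ℂ) • 1).IsHermitian := fun e => by
    rw [hshift]
    exact lap_isHermitian.neg.add (isHermitian_diagonal_of_self_adjoint _
      (funext fun x => Complex.conj_ofReal _))
  have hD : ∀ e : ℝ, 0 ≤ e → (blk Ωᶜ Ωᶜ (H + (e : ℂ) • 1)).PosDef := fun e he => by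
    rw [hshift]
    refine posDef_blk_compl_neg_lap_add_diagonal Ω _ fun x hx => ?_
    have h2μ : 2 * μ ≤ U * ρt x := by
      rw [div_le_iff₀ hU] at hδ
      nlinarith [hρδ x hx]
    linarith
  refine ⟨hD, fun lam hlam => ?_⟩
  rw [feshbach_eq_blk_schur Ω lam _ (hshift lam)]
  refine (by simpa using hHerm 0 : H.IsHermitian).negCount_le_negCount_of_quadForm_le
    (isHermitian_blk_schur Ω (hHerm lam) (hD lam hlam.le)) (LinearMap.funLeft ℂ ℂ Subtype.val)
    (-lam) fun v => ?_
  calc _ ≤ quadForm (H + (lam : ℂ) • 1) v :=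
        quadForm_blk_schur_le Ω (hHerm lam) (hD lam hlam.le) v
    _ = _ := by rw [quadForm_add, quadForm_smul_one]; ring

/-- Feshbach eigenvalue counting, Lemma 3.2's proof: with
`H = -Δ - μ + Uρ̃`, `ρ̃ ≥ δ ≥ 2μ/U` off `Ω`, the block `P_Ω^⊥(H+e)P_Ω^⊥` is positive
definite for `e ≥ 0`, and the number of eigenvalues of `H` below `-λ` is at most the
number of negative eigenvalues of the Feshbach matrix `F(λ) + λ` on `Ω`. -/
theorem feshbach_eigenvalue_counting (d L : ℕ) (hd : 1 ≤ d) [NeZero L]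
    (hLeven : Even L) (hL2 : 2 ≤ L) (μ U δ : ℝ) (hμ : 0 < μ) (hU : 0 < U)
    (hδ : 2 * μ / U ≤ δ)
    (Ω : Set (Lam d L)) (ρt : Lam d L → ℝ) (hρ0 : ∀ x, 0 ≤ ρt x)
    (hρδ : ∀ x, x ∉ Ω → δ ≤ ρt x)
    (H : Matrix (Lam d L) (Lam d L) ℂ)
    (hH : H = -(lap d L) - (μ : ℂ) • 1 + Matrix.diagonal (fun x => (U * ρt x : ℂ))) :
    (∀ e : ℝ, 0 ≤ e → (blk Ωᶜ Ωᶜ (H + (e : ℂ) • 1)).PosDef) ∧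
    (∀ lam : ℝ, 0 < lam →
      negCount H (-lam) ≤
        negCount (blk Ω Ω H
            - blk Ω Ωᶜ (lap d L) * (blk Ωᶜ Ωᶜ (H + (lam : ℂ) • 1))⁻¹
                * blk Ωᶜ Ω (lap d L)
            + (lam : ℂ) • 1) 0) :=
  feshbach_eigenvalue_counting_general d L μ U δ hμ hU hδ Ω ρt hρδ H hH
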